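/- Let C: f = 0 be a free divisor of degree d which is not a pencil of lines, with exponents d_1 ≤ d_2. Then mdr(f) = d_1, ct(f) = d + d_1 − 2 and st(f) = d + d_2 − 3. -/

import Mathlib

open MvPolynomial

noncomputable section

/-- The polynomial ring `S = ℂ[x,y,z]`. -/
abbrev S3 : Type := MvPolynomial (Fin 3) ℂ

/-- The Jacobian ideal of `f`, generated by the three partial derivatives. -/
def jacobianIdeal (f : S3) : Ideal S3 :=
  Ideal.span {pderiv 0 f, pderiv 1 f, pderiv 2 f}

/-- The dimension `m(f)_k` of the degree `k` homogeneous component of the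
Milnor algebra `M(f) = S/J_f`. -/
def milnorDim (f : S3) (k : ℕ) : ℕ :=
  Module.finrank ℂ (Submodule.map (Ideal.Quotient.mkₐ ℂ (jacobianIdeal f)).toLinearMap
    (homogeneousSubmodule (Fin 3) ℂ k))

/-- The `S`-linear map `(a,b,c) ↦ a f_x + b f_y + c f_z`. -/
def relMap (f : S3) : (Fin 3 → S3) →ₗ[S3] S3 where
  toFun ρ := ∑ i, ρ i * pderiv i f
  map_add' a b := by simp [add_mul, Finset.sum_add_distrib]
  map_smul' c a := by simp [Finset.mul_sum, mul_assoc]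

/-- The module `AR(f)` of all relations among the partial derivatives of `f`. -/
def AR (f : S3) : Submodule S3 (Fin 3 → S3) := LinearMap.ker (relMap f)

/-- The degree `m` graded piece `AR(f)_m`, as a `ℂ`-subspace of `S³`. -/
def ARgr (f : S3) (m : ℕ) : Submodule ℂ (Fin 3 → S3) :=
  (LinearMap.ker ((relMap f).restrictScalars ℂ)) ⊓
    Submodule.pi Set.univ (fun _ => homogeneousSubmodule (Fin 3) ℂ m)

/-- `ar(f)_m = dim_ℂ AR(f)_m`. -/
def arDim (f : S3) (m : ℕ) : ℕ := Module.finrank ℂ (ARgr f m)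

/-- A vector of polynomials is homogeneous of degree `m` if all components are. -/
def IsHomogVec (ρ : Fin 3 → S3) (m : ℕ) : Prop := ∀ i, (ρ i).IsHomogeneous m

/-- `C : f = 0` is a free divisor with exponents `d₁, d₂` if `AR(f)` is a free
`S`-module with a homogeneous basis in degrees `d₁` and `d₂`. -/
def IsFreeDivisorWith (f : S3) (d₁ d₂ : ℕ) : Prop :=
  ∃ b : Module.Basis (Fin 2) S3 (AR f),
    IsHomogVec (↑(b 0)) d₁ ∧ IsHomogVec (↑(b 1)) d₂

/-- `C : f = 0` is a free divisor if `AR(f)` is a free graded `S`-module of rank two. -/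
def IsFreeDivisor (f : S3) : Prop := ∃ d₁ d₂ : ℕ, IsFreeDivisorWith f d₁ d₂

/-- `binom(a, 2)` for an integer `a`, zero when `a < 2`. -/
def chooseTwo (a : ℤ) : ℤ := (a.toNat).choose 2

/-- The Hilbert function `m(f_s)_k` of the Milnor algebra of a smooth plane curve
of degree `d`. -/
def smoothMilnorDim (d : ℕ) (k : ℤ) : ℤ :=
  chooseTwo (k + 2) - 3 * chooseTwo (k - d + 3) + 3 * chooseTwo (k - 2 * d + 4)
    - chooseTwo (k - 3 * d + 5)

/-- `m(f)_k` extended to integer indices by zero. -/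
def milnorDimZ (f : S3) (k : ℤ) : ℤ := if k < 0 then 0 else milnorDim f k.toNat

/-- `ar(f)_m` extended to integer indices by zero. -/
def arDimZ (f : S3) (m : ℤ) : ℤ := if m < 0 then 0 else arDim f m.toNat

/-- The coincidence threshold `ct(f)`. -/
def ctf (f : S3) (d : ℕ) : ℕ :=
  sSup {q : ℕ | ∀ k ≤ q, (milnorDim f k : ℤ) = smoothMilnorDim d k}

/-- The stability threshold `st(f)`. -/
def stf (f : S3) (τ : ℕ) : ℕ := sInf {q : ℕ | ∀ k ≥ q, milnorDim f k = τ}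

/-- `mdr(f)`, the minimal degree of a syzygy. -/
def mdr (f : S3) : ℕ := sInf {q : ℕ | ARgr f q ≠ ⊥}

/-- The irrelevant maximal ideal `(x,y,z)`. -/
def maxIdeal3 : Ideal S3 := Ideal.span {X 0, X 1, X 2}

/-- The saturation `I_f` of the Jacobian ideal with respect to `(x,y,z)`. -/
def satJacobian (f : S3) : Ideal S3 := ⨆ n : ℕ, (jacobianIdeal f).colon ((maxIdeal3 ^ n : Ideal S3) : Set S3)

/-! Since `J_f ∩ S_k` is the image of `S_{k-d+1}³` under `(a, b, c) ↦ a f_x + b f_y + c f_z`,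
whose kernel is `AR(f)_{k-d+1}`, one has `m(f)_k = C(k+2, 2) - 3 C(k-d+3, 2) + ar(f)_{k-d+1}`.
For a free curve the homogeneous basis `b₀, b₁` identifies `AR(f)_m` with `S_{m-d₁} ⊕ S_{m-d₂}`,
so `m(f)` is an explicit sum of binomial coefficients. Its first difference is eventually
`d - 1 - d₁ - d₂`, so the stability of `m(f)` forces `d₁ + d₂ = d - 1`, and the three invariants
are then read off the explicit formula. -/
open Module

namespace MvPolynomial
variable {σ R : Type*} [CommSemiring R]

attribute [local instance] gradedAlgebra in
theorem homogeneousComponent_mul_of_isHomogeneous {h : MvPolynomial σ R} {e : ℕ}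
    (hh : h.IsHomogeneous e) (a : MvPolynomial σ R) (n : ℕ) :
    homogeneousComponent n (a * h) = if e ≤ n then homogeneousComponent (n - e) a * h else 0 := by
  have := DirectSum.coe_decompose_mul_of_right_mem (homogeneousSubmodule σ R) n (a := a) hh
  simpa only [DirectSum.decompose, Equiv.coe_fn_mk, decomposition.decompose'_apply] using this

instance [Finite σ] {K : Type*} [Field K] (n : ℕ) :
    Module.Finite K (homogeneousSubmodule σ K n) :=
  Module.Finite.iff_fg.mpr (homogeneousSubmodule_fg σ K n)

theorem finrank_homogeneousSubmodule [Fintype σ] [DecidableEq σ] (K : Type*) [Field K] (n : ℕ) :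
    finrank K (homogeneousSubmodule σ K n) = (Fintype.card σ).multichoose n := by
  let e : {d : σ →₀ ℕ | d.degree = n} ≃ Sym σ n := (Sym.equivNatSum σ n).symm
  have : Fintype {d : σ →₀ ℕ | d.degree = n} := Fintype.ofEquiv _ e.symm
  rw [homogeneousSubmodule_eq_finsupp_supported,
    (AddMonoidAlgebra.supportedEquivFinsupp (R := K) {d : σ →₀ ℕ | d.degree = n}).finrank_eq,
    finrank_finsupp_self, Fintype.card_congr e, Sym.card_sym_eq_multichoose]

end MvPolynomial

theorem LinearMap.finrank_map_add_finrank_inf_ker {K M N : Type*} [DivisionRing K]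
    [AddCommGroup M] [Module K M] [AddCommGroup N] [Module K N] (g : M →ₗ[K] N)
    (V : Submodule K M) [Module.Finite K V] :
    finrank K (V.map g) + finrank K (V ⊓ LinearMap.ker g : Submodule K M) = finrank K V := by
  rw [← (g.domRestrict V).finrank_range_add_finrank_ker, LinearMap.range_domRestrict,
    LinearMap.ker_domRestrict, ← Submodule.map_comap_subtype, Submodule.finrank_map_subtype_eq]

def Submodule.piUnivEquiv {R ι : Type*} [Semiring R] {φ : ι → Type*}
    [(i : ι) → AddCommMonoid (φ i)] [(i : ι) → Module R (φ i)] (p : (i : ι) → Submodule R (φ i)) :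
    Submodule.pi Set.univ p ≃ₗ[R] ((i : ι) → p i) where
  toFun v i := ⟨v.1 i, v.2 i (Set.mem_univ i)⟩
  invFun w := ⟨fun i => w i, fun i _ => (w i).2⟩
  map_add' _ _ := rfl
  map_smul' _ _ := rfl
  left_inv _ := rfl
  right_inv _ := rfl

lemma chooseTwo_of_le_one {a : ℤ} (h : a ≤ 1) : chooseTwo a = 0 := by
  simp [chooseTwo, Nat.choose_eq_zero_of_lt (show a.toNat < 2 by omega)]

lemma chooseTwo_nonneg (a : ℤ) : 0 ≤ chooseTwo a := Int.natCast_nonneg _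

lemma chooseTwo_two : chooseTwo 2 = 1 := rfl

lemma chooseTwo_add_one (a : ℤ) : chooseTwo (a + 1) = chooseTwo a + max a 0 := by
  rcases le_or_gt a 0 with h | h
  · rw [chooseTwo_of_le_one (by omega), chooseTwo_of_le_one (by omega)]; omega
  · have : (a + 1).toNat = a.toNat + 1 := by omega
    rw [chooseTwo, chooseTwo, this, Nat.choose_succ_succ', Nat.choose_one_right]
    push_cast
    omega

lemma finrank_homogeneousSubmodule_fin_three (n : ℕ) :
    (finrank ℂ (homogeneousSubmodule (Fin 3) ℂ n) : ℤ) = chooseTwo (n + 2) := by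
  rw [finrank_homogeneousSubmodule, Fintype.card_fin, Nat.multichoose_eq, chooseTwo,
    show ((n : ℤ) + 2).toNat = n + 2 by omega, show 3 + n - 1 = n + 2 by omega,
    Nat.choose_symm_of_eq_add]
  omega

lemma mem_jacobianIdeal_iff {f g : S3} : g ∈ jacobianIdeal f ↔ ∃ ρ, relMap f ρ = g := by
  have : ({pderiv 0 f, pderiv 1 f, pderiv 2 f} : Set S3) = Set.range fun i => pderiv i f := by
    ext; simp [Fin.exists_fin_succ, eq_comm]
  rw [jacobianIdeal, this, Ideal.mem_span_range_iff_exists_fun]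
  rfl

lemma milnorDim_add_finrank_inf_jacobianIdeal (f : S3) (k : ℕ) :
    milnorDim f k + finrank ℂ (homogeneousSubmodule (Fin 3) ℂ k ⊓
      (jacobianIdeal f).restrictScalars ℂ : Submodule ℂ S3) =
      finrank ℂ (homogeneousSubmodule (Fin 3) ℂ k) := by
  have hker : LinearMap.ker (Ideal.Quotient.mkₐ ℂ (jacobianIdeal f)).toLinearMap =
      (jacobianIdeal f).restrictScalars ℂ := by
    ext; simp [Ideal.Quotient.eq_zero_iff_mem]
  rw [milnorDim, ← hker]
  exact LinearMap.finrank_map_add_finrank_inf_ker _ _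

abbrev homogVecSubmodule (m : ℕ) : Submodule ℂ (Fin 3 → S3) :=
  Submodule.pi Set.univ fun _ => homogeneousSubmodule (Fin 3) ℂ m

lemma finrank_homogVecSubmodule (m : ℕ) :
    (finrank ℂ (homogVecSubmodule m) : ℤ) = 3 * chooseTwo (m + 2) := by
  rw [(Submodule.piUnivEquiv fun _ : Fin 3 => homogeneousSubmodule (Fin 3) ℂ m).finrank_eq,
    Module.finrank_pi_fintype]
  simp [finrank_homogeneousSubmodule_fin_three]

instance (m : ℕ) : Module.Finite ℂ (homogVecSubmodule m) :=
  Module.Finite.equiv (Submodule.piUnivEquiv fun _ : Fin 3 => homogeneousSubmodule (Fin 3) ℂ m).symm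

instance (f : S3) (m : ℕ) : Module.Finite ℂ (ARgr f m) :=
  Submodule.finiteDimensional_of_le (show ARgr f m ≤ homogVecSubmodule m from inf_le_right)

lemma arDim_add_finrank_map_relMap (f : S3) (m : ℕ) :
    (arDim f m : ℤ) + finrank ℂ ((homogVecSubmodule m).map ((relMap f).restrictScalars ℂ)) =
      3 * chooseTwo (m + 2) := by
  rw [← finrank_homogVecSubmodule,
    ← LinearMap.finrank_map_add_finrank_inf_ker ((relMap f).restrictScalars ℂ), arDim, ARgr,
    inf_comm]
  push_cast
  ring

section HomogeneousJacobian
variable {f : S3} {d : ℕ} (hf : f.IsHomogeneous d)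
include hf

lemma homogeneousComponent_relMap (ρ : Fin 3 → S3) (k : ℕ) :
    homogeneousComponent k (relMap f ρ) =
      if d - 1 ≤ k then relMap f fun i => homogeneousComponent (k - (d - 1)) (ρ i) else 0 := by
  simp only [relMap, LinearMap.coe_mk, AddHom.coe_mk, map_sum,
    homogeneousComponent_mul_of_isHomogeneous hf.pderiv]
  split_ifs <;> simp

lemma homogeneousSubmodule_inf_jacobianIdeal_of_le {k : ℕ} (hk : d - 1 ≤ k) :
    homogeneousSubmodule (Fin 3) ℂ k ⊓ (jacobianIdeal f).restrictScalars ℂ =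
      (homogVecSubmodule (k - (d - 1))).map ((relMap f).restrictScalars ℂ) := by
  apply le_antisymm
  · rintro g ⟨hg, hgJ⟩
    obtain ⟨ρ, rfl⟩ := mem_jacobianIdeal_iff.mp hgJ
    refine ⟨fun i => homogeneousComponent (k - (d - 1)) (ρ i),
      fun i _ => homogeneousComponent_mem _ _, ?_⟩
    have h := homogeneousComponent_relMap hf ρ k
    rw [if_pos hk, homogeneousComponent_eq_self hg] at h
    exact h.symm
  · rintro _ ⟨ρ, hρ, rfl⟩
    refine ⟨?_, mem_jacobianIdeal_iff.mpr ⟨ρ, rfl⟩⟩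
    rw [SetLike.mem_coe, mem_homogeneousSubmodule, ← Nat.sub_add_cancel hk]
    exact IsHomogeneous.sum _ _ _ fun i _ => (hρ i (Set.mem_univ i)).mul hf.pderiv

lemma homogeneousSubmodule_inf_jacobianIdeal_of_lt {k : ℕ} (hk : k < d - 1) :
    homogeneousSubmodule (Fin 3) ℂ k ⊓ (jacobianIdeal f).restrictScalars ℂ = ⊥ := by
  rw [eq_bot_iff]
  rintro g ⟨hg, hgJ⟩
  obtain ⟨ρ, rfl⟩ := mem_jacobianIdeal_iff.mp hgJ
  have h := homogeneousComponent_relMap hf ρ k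
  rwa [if_neg (by omega), homogeneousComponent_eq_self hg] at h

end HomogeneousJacobian

lemma milnorDim_eq {f : S3} {d : ℕ} (hf : f.IsHomogeneous d) (hd : 1 ≤ d) (k : ℕ) :
    (milnorDim f k : ℤ) = chooseTwo (k + 2) - 3 * chooseTwo (k - d + 3) + arDimZ f (k - d + 1) := by
  have h := milnorDim_add_finrank_inf_jacobianIdeal f k
  have hS := finrank_homogeneousSubmodule_fin_three k
  rcases le_or_gt (d - 1) k with hk | hk
  · rw [homogeneousSubmodule_inf_jacobianIdeal_of_le hf hk] at h
    have har := arDim_add_finrank_map_relMap f (k - (d - 1))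
    rw [show ((k - (d - 1) : ℕ) : ℤ) + 2 = k - d + 3 by omega] at har
    rw [arDimZ, if_neg (show ¬(k : ℤ) - d + 1 < 0 by omega),
      show ((k : ℤ) - d + 1).toNat = k - (d - 1) by omega]
    omega
  · rw [homogeneousSubmodule_inf_jacobianIdeal_of_lt hf hk, finrank_bot] at h
    rw [arDimZ, if_pos (show (k : ℤ) - d + 1 < 0 by omega),
      chooseTwo_of_le_one (show (k : ℤ) - d + 3 ≤ 1 by omega)]
    omega

def homogPiece (j : ℤ) : Submodule ℂ S3 :=
  if 0 ≤ j then homogeneousSubmodule (Fin 3) ℂ j.toNat else ⊥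

instance (j : ℤ) : Module.Finite ℂ (homogPiece j) := by
  by_cases hj : 0 ≤ j
  · rw [homogPiece, if_pos hj]; infer_instance
  · rw [homogPiece, if_neg hj]; infer_instance

lemma finrank_homogPiece (j : ℤ) : (finrank ℂ (homogPiece j) : ℤ) = chooseTwo (j + 2) := by
  by_cases hj : 0 ≤ j
  · rw [homogPiece, if_pos hj, finrank_homogeneousSubmodule_fin_three, Int.toNat_of_nonneg hj]
  · rw [homogPiece, if_neg hj, finrank_bot, chooseTwo_of_le_one (by omega), Nat.cast_zero]

lemma isHomogeneous_mul_of_mem_homogPiece {a h : S3} {j : ℤ} {e m : ℕ} (ha : a ∈ homogPiece j)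
    (hh : h.IsHomogeneous e) (hm : j + e = m) : (a * h).IsHomogeneous m := by
  unfold homogPiece at ha
  split_ifs at ha with hj
  · rw [show m = j.toNat + e by omega]
    exact (mem_homogeneousSubmodule _ _).mp ha |>.mul hh
  · rw [(Submodule.mem_bot ℂ).mp ha, zero_mul]
    exact isHomogeneous_zero _ _ _

lemma exists_mem_homogPiece_homogeneousComponent_mul (a : S3) (e m : ℕ) :
    ∃ a' ∈ homogPiece ((m : ℤ) - e), ∀ h : S3, h.IsHomogeneous e →
      homogeneousComponent m (a * h) = a' * h := by
  by_cases he : e ≤ m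
  · refine ⟨homogeneousComponent (m - e) a, ?_, fun h hh => ?_⟩
    · rw [homogPiece, if_pos (by omega), show ((m : ℤ) - e).toNat = m - e by omega]
      exact homogeneousComponent_mem _ _
    · rw [homogeneousComponent_mul_of_isHomogeneous hh, if_pos he]
  · refine ⟨0, Submodule.zero_mem _, fun h hh => ?_⟩
    rw [homogeneousComponent_mul_of_isHomogeneous hh, if_neg he, zero_mul]

section FreeDivisor
variable {f : S3} (b : Module.Basis (Fin 2) S3 (AR f))

def basisCombination (j₁ j₂ : ℤ) : (homogPiece j₁ × homogPiece j₂) →ₗ[ℂ] (Fin 3 → S3) where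
  toFun p := (p.1 : S3) • (b 0 : Fin 3 → S3) + (p.2 : S3) • (b 1 : Fin 3 → S3)
  map_add' p q := by simp only [Prod.fst_add, Prod.snd_add, Submodule.coe_add, add_smul]; abel
  map_smul' r p := by simp [smul_add, smul_assoc]

lemma basisCombination_injective (j₁ j₂ : ℤ) : Function.Injective (basisCombination b j₁ j₂) := by
  have hli : LinearIndependent S3 ![b 0, b 1] := by
    convert b.linearIndependent
    ext i
    fin_cases i <;> rfl
  rw [← LinearMap.ker_eq_bot, LinearMap.ker_eq_bot']
  rintro ⟨⟨a, ha⟩, ⟨c, hc⟩⟩ h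
  obtain ⟨rfl, rfl⟩ := LinearIndependent.pair_iff.mp hli a c (Subtype.ext h)
  rfl

variable {b} {d₁ d₂ : ℕ} (hb₀ : IsHomogVec (↑(b 0)) d₁) (hb₁ : IsHomogVec (↑(b 1)) d₂)
include hb₀ hb₁

lemma range_basisCombination (m : ℕ) :
    LinearMap.range (basisCombination b (m - d₁) (m - d₂)) = ARgr f m := by
  apply le_antisymm
  · rintro _ ⟨⟨⟨a, ha⟩, ⟨c, hc⟩⟩, rfl⟩
    refine ⟨?_, fun i _ => ?_⟩
    · change relMap f (a • (b 0 : Fin 3 → S3) + c • (b 1 : Fin 3 → S3)) = 0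
      rw [map_add, map_smul, map_smul, LinearMap.mem_ker.mp (b 0).2,
        LinearMap.mem_ker.mp (b 1).2, smul_zero, smul_zero, add_zero]
    · exact (isHomogeneous_mul_of_mem_homogPiece ha (hb₀ i) (by omega)).add
        (isHomogeneous_mul_of_mem_homogPiece hc (hb₁ i) (by omega))
  · rintro ρ ⟨hρ, hρm⟩
    let r := b.repr ⟨ρ, hρ⟩
    have hρr : ρ = r 0 • (b 0 : Fin 3 → S3) + r 1 • (b 1 : Fin 3 → S3) := by
      have h := congrArg Subtype.val (b.sum_repr ⟨ρ, hρ⟩)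
      rw [Fin.sum_univ_two] at h
      exact h.symm
    obtain ⟨a, ha, hah⟩ := exists_mem_homogPiece_homogeneousComponent_mul (r 0) d₁ m
    obtain ⟨c, hc, hch⟩ := exists_mem_homogPiece_homogeneousComponent_mul (r 1) d₂ m
    refine ⟨⟨⟨a, ha⟩, ⟨c, hc⟩⟩, funext fun i => ?_⟩
    change a * (b 0 : Fin 3 → S3) i + c * (b 1 : Fin 3 → S3) i = ρ i
    rw [← hah _ (hb₀ i), ← hch _ (hb₁ i), ← map_add, ← homogeneousComponent_eq_self (hρm i trivial)]
    conv_rhs => rw [hρr]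
    rfl

lemma arDim_eq_of_basis (m : ℕ) :
    (arDim f m : ℤ) = chooseTwo (m - d₁ + 2) + chooseTwo (m - d₂ + 2) := by
  rw [arDim, ← range_basisCombination hb₀ hb₁, LinearMap.finrank_range_of_inj
    (basisCombination_injective b _ _), finrank_prod]
  push_cast
  rw [finrank_homogPiece, finrank_homogPiece]

lemma arDimZ_eq_of_basis (m : ℤ) :
    arDimZ f m = chooseTwo (m - d₁ + 2) + chooseTwo (m - d₂ + 2) := by
  rw [arDimZ]
  split_ifs with hm
  · rw [chooseTwo_of_le_one (show m - d₁ + 2 ≤ 1 by omega),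
      chooseTwo_of_le_one (show m - d₂ + 2 ≤ 1 by omega), add_zero]
  · rw [arDim_eq_of_basis hb₀ hb₁, Int.toNat_of_nonneg (by omega)]

lemma mdr_eq_of_basis (h12 : d₁ ≤ d₂) : mdr f = d₁ := by
  refine IsLeast.csInf_eq ⟨?_, fun q hq => ?_⟩
  · change ARgr f d₁ ≠ ⊥
    rw [Submodule.ne_bot_iff]
    exact ⟨b 0, ⟨(b 0).2, fun i _ => hb₀ i⟩, fun h => b.ne_zero 0 (Subtype.ext h)⟩
  · by_contra! hlt
    have h := arDim_eq_of_basis hb₀ hb₁ q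
    rw [chooseTwo_of_le_one (show (q : ℤ) - d₁ + 2 ≤ 1 by omega),
      chooseTwo_of_le_one (show (q : ℤ) - d₂ + 2 ≤ 1 by omega)] at h
    exact hq (Submodule.finrank_eq_zero.mp (show arDim f q = 0 by omega))

end FreeDivisor

def freeMilnorDim (d d₁ d₂ : ℕ) (k : ℤ) : ℤ :=
  chooseTwo (k + 2) - 3 * chooseTwo (k - d + 3) + chooseTwo (k - d - d₁ + 3) +
    chooseTwo (k - d - d₂ + 3)

lemma milnorDim_eq_freeMilnorDim {f : S3} {d : ℕ} (hf : f.IsHomogeneous d) (hd : 1 ≤ d)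
    {b : Module.Basis (Fin 2) S3 (AR f)} {d₁ d₂ : ℕ} (hb₀ : IsHomogVec (↑(b 0)) d₁)
    (hb₁ : IsHomogVec (↑(b 1)) d₂) (k : ℕ) :
    (milnorDim f k : ℤ) = freeMilnorDim d d₁ d₂ k := by
  rw [milnorDim_eq hf hd, arDimZ_eq_of_basis hb₀ hb₁, freeMilnorDim]
  ring_nf

section FreeMilnorDim
variable {d d₁ d₂ : ℕ}

lemma freeMilnorDim_add_one (k : ℤ) :
    freeMilnorDim d d₁ d₂ (k + 1) = freeMilnorDim d d₁ d₂ k + (max (k + 2) 0 -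
      3 * max (k - d + 3) 0 + max (k - d - d₁ + 3) 0 + max (k - d - d₂ + 3) 0) := by
  simp only [freeMilnorDim, show ∀ a : ℤ, k + 1 + a = k + a + 1 from fun a => by ring,
    show ∀ a b : ℤ, k + 1 - a + b = k - a + b + 1 from fun a b => by ring,
    show ∀ a b c : ℤ, k + 1 - a - b + c = k - a - b + c + 1 from fun a b c => by ring,
    chooseTwo_add_one]
  ring

lemma freeMilnorDim_add_one_of_le (hd : 1 ≤ d) (h12 : d₁ ≤ d₂) {k : ℤ} (hk : d + d₂ - 3 ≤ k) :
    freeMilnorDim d d₁ d₂ (k + 1) = freeMilnorDim d d₁ d₂ k + (d - 1 - d₁ - d₂) := by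
  rw [freeMilnorDim_add_one]
  omega

variable (h12 : d₁ ≤ d₂) (hpencil : 1 ≤ d₁) (hsum : d₁ + d₂ + 1 = d)
include h12 hsum

lemma freeMilnorDim_eq_smoothMilnorDim {k : ℤ} (hk : k ≤ d + d₁ - 2) :
    freeMilnorDim d d₁ d₂ k = smoothMilnorDim d k := by
  rw [freeMilnorDim, smoothMilnorDim, chooseTwo_of_le_one (show k - d - d₁ + 3 ≤ 1 by omega),
    chooseTwo_of_le_one (show k - d - d₂ + 3 ≤ 1 by omega),
    chooseTwo_of_le_one (show k - 2 * d + 4 ≤ 1 by omega),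
    chooseTwo_of_le_one (show k - 3 * d + 5 ≤ 1 by omega)]
  ring

include hpencil

lemma freeMilnorDim_ne_smoothMilnorDim :
    freeMilnorDim d d₁ d₂ (d + d₁ - 1) ≠ smoothMilnorDim d (d + d₁ - 1) := by
  rw [freeMilnorDim, smoothMilnorDim, show (d + d₁ - 1 : ℤ) - d - d₁ + 3 = 2 by ring, chooseTwo_two,
    chooseTwo_of_le_one (show (d + d₁ - 1 : ℤ) - 2 * d + 4 ≤ 1 by omega),
    chooseTwo_of_le_one (show (d + d₁ - 1 : ℤ) - 3 * d + 5 ≤ 1 by omega)]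
  have := chooseTwo_nonneg ((d + d₁ - 1 : ℤ) - d - d₂ + 3)
  omega

lemma freeMilnorDim_ne_of_add_one :
    freeMilnorDim d d₁ d₂ (d + d₂ - 4 + 1) ≠ freeMilnorDim d d₁ d₂ (d + d₂ - 4) := by
  rw [freeMilnorDim_add_one]
  omega

end FreeMilnorDim

lemma one_le_of_milnorDim_eventually_eq {f : S3} {d N τ : ℕ} (hf : f.IsHomogeneous d)
    (hN : ∀ k ≥ N, milnorDim f k = τ) : 1 ≤ d := by
  by_contra! hd
  obtain rfl : d = 0 := by omega
  have hJ : jacobianIdeal f = ⊥ := by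
    have hC : f = C (f.coeff 0) :=
      totalDegree_eq_zero_iff_eq_C.mp ((totalDegree_zero_iff_isHomogeneous _).mpr hf)
    rw [jacobianIdeal, hC]
    simp
  have hm (k : ℕ) : (milnorDim f k : ℤ) = chooseTwo (k + 2) := by
    have h := milnorDim_add_finrank_inf_jacobianIdeal f k
    rw [hJ, Submodule.restrictScalars_bot, inf_bot_eq, finrank_bot, add_zero] at h
    rw [h, finrank_homogeneousSubmodule_fin_three]
  have h₀ := hm N
  have h₁ := hm (N + 1)
  rw [hN N le_rfl] at h₀
  rw [hN (N + 1) (by omega), Nat.cast_add_one, add_right_comm, chooseTwo_add_one] at h₁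
  omega

lemma ctf_eq {f : S3} {d q : ℕ} (hle : ∀ k ≤ q, (milnorDim f k : ℤ) = smoothMilnorDim d k)
    (hne : (milnorDim f (q + 1) : ℤ) ≠ smoothMilnorDim d (q + 1 : ℕ)) : ctf f d = q :=
  IsGreatest.csSup_eq ⟨hle, fun _ hq' => by
    by_contra! h
    exact hne (hq' _ h)⟩

lemma stf_eq {f : S3} {τ q : ℕ} (hge : ∀ k ≥ q + 1, milnorDim f k = τ)
    (hne : milnorDim f q ≠ τ) : stf f τ = q + 1 :=
  IsLeast.csInf_eq ⟨hge, fun _ hq' => by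
    by_contra! h
    exact hne (hq' _ (by omega))⟩

lemma Nat.forall_ge_eq_of_succ_eq {α : Type*} {u : ℕ → α} {q N : ℕ} {a : α}
    (hstep : ∀ k ≥ q, u (k + 1) = u k) (hN : ∀ k ≥ N, u k = a) : ∀ k ≥ q, u k = a := by
  intro k hk
  have hconst : ∀ n ≥ k, u n = u k := fun n hn => by
    induction n, hn using Nat.le_induction with
    | base => rfl
    | succ n hkn ih => rw [hstep n (by omega), ih]
  rw [← hconst (max k N) (le_max_left _ _), hN _ (le_max_right _ _)]

section MilnorDim
variable {f : S3} {d d₁ d₂ : ℕ} (hM : ∀ k : ℕ, (milnorDim f k : ℤ) = freeMilnorDim d d₁ d₂ k)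
  (hd : 1 ≤ d) (h12 : d₁ ≤ d₂)
include hM h12

include hd in
lemma milnorDim_add_one_of_le {k : ℕ} (hk : d + d₂ - 3 ≤ (k : ℤ)) :
    (milnorDim f (k + 1) : ℤ) = milnorDim f k + (d - 1 - d₁ - d₂) := by
  rw [hM, hM, Nat.cast_add_one, freeMilnorDim_add_one_of_le hd h12 hk]

include hd in
lemma exponents_add_one_eq {N τ : ℕ} (hN : ∀ k ≥ N, milnorDim f k = τ) : d₁ + d₂ + 1 = d := by
  have h := milnorDim_add_one_of_le hM hd h12 (k := N + d + d₂) (by omega)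
  rw [hN _ (by omega), hN _ (by omega)] at h
  omega

variable (hpencil : 1 ≤ d₁) (hsum : d₁ + d₂ + 1 = d)
include hpencil hsum

lemma ctf_eq_of_freeMilnorDim : ctf f d = d + d₁ - 2 := by
  refine ctf_eq (fun k hk => ?_) ?_
  · rw [hM, freeMilnorDim_eq_smoothMilnorDim h12 hsum (by omega)]
  · rw [hM, show ((d + d₁ - 2 + 1 : ℕ) : ℤ) = d + d₁ - 1 by omega]
    exact freeMilnorDim_ne_smoothMilnorDim h12 hpencil hsum

include hd in
lemma stf_eq_of_freeMilnorDim {N τ : ℕ} (hN : ∀ k ≥ N, milnorDim f k = τ) :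
    stf f τ = d + d₂ - 3 := by
  have hconst := Nat.forall_ge_eq_of_succ_eq (q := d + d₂ - 3)
    (fun k hk => by have := milnorDim_add_one_of_le hM hd h12 (k := k) (by omega); omega) hN
  rw [show d + d₂ - 3 = d + d₂ - 4 + 1 by omega] at hconst ⊢
  refine stf_eq hconst fun h => freeMilnorDim_ne_of_add_one h12 hpencil hsum ?_
  have h' := congrArg (fun n : ℕ => (n : ℤ)) (hconst _ le_rfl)
  rw [← h] at h'
  simpa only [hM, show ((d + d₂ - 4 : ℕ) : ℤ) = d + d₂ - 4 by omega, Nat.cast_add_one] using h'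

end MilnorDim

theorem stmt5_general (f : S3) (d : ℕ) (hf : f.IsHomogeneous d)
    (d₁ d₂ : ℕ) (hfree : IsFreeDivisorWith f d₁ d₂) (h12 : d₁ ≤ d₂) (hpencil : 1 ≤ d₁)
    (τ : ℕ) (hτ : ∃ N : ℕ, ∀ k ≥ N, milnorDim f k = τ) :
    mdr f = d₁ ∧ (ctf f d : ℤ) = (d : ℤ) + d₁ - 2 ∧ (stf f τ : ℤ) = (d : ℤ) + d₂ - 3 := by
  obtain ⟨b, hb₀, hb₁⟩ := hfree
  obtain ⟨N, hN⟩ := hτ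
  have hd := one_le_of_milnorDim_eventually_eq hf hN
  have hM := milnorDim_eq_freeMilnorDim hf hd hb₀ hb₁
  have hsum := exponents_add_one_eq hM hd h12 hN
  refine ⟨mdr_eq_of_basis hb₀ hb₁ h12, ?_, ?_⟩
  · rw [ctf_eq_of_freeMilnorDim hM h12 hpencil hsum]
    omega
  · rw [stf_eq_of_freeMilnorDim hM hd h12 hpencil hsum hN]
    omega

theorem stmt5 (f : S3) (d : ℕ) (hf : f.IsHomogeneous d) (hred : Squarefree f)
    (d₁ d₂ : ℕ) (hfree : IsFreeDivisorWith f d₁ d₂) (h12 : d₁ ≤ d₂) (hpencil : 1 ≤ d₁)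
    (τ : ℕ) (hτ : ∃ N : ℕ, ∀ k ≥ N, milnorDim f k = τ) :
    mdr f = d₁ ∧ (ctf f d : ℤ) = (d : ℤ) + d₁ - 2 ∧ (stf f τ : ℤ) = (d : ℤ) + d₂ - 3 :=
  stmt5_general f d hf d₁ d₂ hfree h12 hpencil τ hτ

end
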